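/- If F is a closure function (monotonic, idempotent, extensive) on circuit states, then the closure function for sequences F→ is idempotent: F→(F→(σ)) = F→(σ) for every sequence σ. -/

import Mathlib

inductive V : Type
  | zero | one | X | T
deriving DecidableEq

instance instFintypeV : Fintype V where
  elems := ⟨(↑[V.zero, V.one, V.X, V.T] : Multiset V), by decide⟩
  complete := by intro x; cases x <;> decide

def vleB : V → V → Bool := fun a b =>
  a = b || a = V.X || b = V.T

def vlub : V → V → V
  | V.X, b => b
  | a, V.X => a
  | a, b => if a = b then a else V.T

def vglb : V → V → V
  | V.T, b => b
  | a, V.T => a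
  | a, b => if a = b then a else V.X

instance : LE V := ⟨fun a b => vleB a b = true⟩
instance : DecidableRel (α := V) (· ≤ ·) := fun a b => inferInstanceAs (Decidable (vleB a b = true))

instance : Lattice V where
  le := (· ≤ ·)
  le_refl := by decide
  le_trans := by decide
  le_antisymm := by decide
  sup := vlub
  le_sup_left := by decide
  le_sup_right := by decide
  sup_le := by decide
  inf := vglb
  inf_le_left := by decide
  inf_le_right := by decide
  le_inf := by decide

instance : BoundedOrder V where
  top := V.T
  le_top := by decide
  bot := V.X
  bot_le := by decide

def vand : V → V → V
  | V.T, _ => V.T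
  | _, V.T => V.T
  | V.zero, _ => V.zero
  | _, V.zero => V.zero
  | V.one, V.one => V.one
  | _, _ => V.X

def vor : V → V → V
  | V.T, _ => V.T
  | _, V.T => V.T
  | V.one, _ => V.one
  | _, V.one => V.one
  | V.zero, V.zero => V.zero
  | _, _ => V.X

def vnot : V → V
  | V.zero => V.one
  | V.one => V.zero
  | V.X => V.X
  | V.T => V.T


/-- `nextf regIn s` propagates register inputs to register outputs:
a register output `n` with register input `n'` receives `s n'`; all other
nodes receive X. -/
def nextf {Node : Type} (regIn : Node → Option Node) (s : Node → V) : Node → V :=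
  fun n => (regIn n).elim V.X s

/-- The closure function for sequences induced by a closure function `F`:
`F→(σ)(0) = F(σ(0))`, `F→(σ)(t+1) = F(σ(t+1) ⊔ next(F→(σ)(t)))`. -/
def Fseq {Node : Type} (F : (Node → V) → (Node → V)) (regIn : Node → Option Node)
    (σ : ℕ → Node → V) : ℕ → Node → V
  | 0 => F (σ 0)
  | t + 1 => F (σ (t + 1) ⊔ nextf regIn (Fseq F regIn σ t))

theorem closure_apply_sup_of_le {α : Type*} [SemilatticeSup α] {F : α → α}
    (hidem : ∀ s, F (F s) = F s) (hext : ∀ s, s ≤ F s) {x b : α} (hb : b ≤ x) :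
    F (F x ⊔ b) = F x := by
  rw [sup_eq_left.mpr (hb.trans (hext x)), hidem]

theorem Fseq_idempotent_general {Node : Type} (F : (Node → V) → (Node → V))
    (regIn : Node → Option Node)
    (hidem : ∀ s : Node → V, F (F s) = F s)
    (hext : ∀ s : Node → V, s ≤ F s)
    (σ : ℕ → Node → V) :
    Fseq F regIn (Fseq F regIn σ) = Fseq F regIn σ := by
  funext t
  induction t with
  | zero => exact hidem (σ 0)
  | succ t ih =>
    simp only [Fseq, ih]
    exact closure_apply_sup_of_le hidem hext le_sup_right

/-- If `F` is a closure function, then the closure function for sequences `F→`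
is idempotent. -/
theorem Fseq_idempotent {Node : Type} (F : (Node → V) → (Node → V))
    (regIn : Node → Option Node)
    (hmono : ∀ s t : Node → V, s ≤ t → F s ≤ F t)
    (hidem : ∀ s : Node → V, F (F s) = F s)
    (hext : ∀ s : Node → V, s ≤ F s)
    (σ : ℕ → Node → V) :
    Fseq F regIn (Fseq F regIn σ) = Fseq F regIn σ :=
  Fseq_idempotent_general F regIn hidem hext σ
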